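/- For nonnegative reals a, b, c with a + b + c = 1, a/(9bc + 4(b-c)^2 + 1) + b/(9ca + 4(c-a)^2 + 1) + c/(9ab + 4(a-b)^2 + 1) ≥ 1/2. -/
import Mathlib

lemma key_tl (a x : ℝ) (ha : 0 ≤ a) (hx : 0 < x) : a*(4-x)/4 ≤ a/x := by
  have h : a/x - a*(4-x)/4 = a*(x-2)^2/(4*x) := by
    field_simp; ring
  have h2 : 0 ≤ a*(x-2)^2/(4*x) := by positivity
  linarith

lemma schur_side (a b c : ℝ) (ha : 0 ≤ a) (hb : 0 ≤ b) (hc : 0 ≤ c) (h : a + b + c = 1) :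
    a*(9*b*c + 4*(b-c)^2 + 1) + b*(9*c*a + 4*(c-a)^2 + 1)
      + c*(9*a*b + 4*(a-b)^2 + 1) ≤ 2 := by
  have schur : a*(a-b)*(a-c) + b*(b-a)*(b-c) + c*(c-a)*(c-b) ≥ 0 := by
    rcases le_total a b with hab | hab <;> rcases le_total b c with hbc | hbc <;>
      rcases le_total a c with hac | hac <;>
      nlinarith [mul_nonneg ha hb, mul_nonneg hb hc, mul_nonneg ha hc,
        sq_nonneg (a-b), sq_nonneg (b-c), sq_nonneg (a-c),
        mul_nonneg (sub_nonneg.2 hab) (sub_nonneg.2 hbc),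
        mul_nonneg (sub_nonneg.2 hab) hc, mul_nonneg (sub_nonneg.2 hbc) ha]
  have h3 : (a+b+c)^3 = 1 := by rw [h]; norm_num
  nlinarith [schur, h3]

theorem stmt_15 (a b c : ℝ) (ha : 0 ≤ a) (hb : 0 ≤ b) (hc : 0 ≤ c) (h : a + b + c = 1) :
    a/(9*b*c + 4*(b-c)^2 + 1) + b/(9*c*a + 4*(c-a)^2 + 1) + c/(9*a*b + 4*(a-b)^2 + 1) ≥ 1/2 := by
  have hD1 : (0:ℝ) < 9*b*c + 4*(b-c)^2 + 1 := by positivity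
  have hD2 : (0:ℝ) < 9*c*a + 4*(c-a)^2 + 1 := by positivity
  have hD3 : (0:ℝ) < 9*a*b + 4*(a-b)^2 + 1 := by positivity
  have k1 := key_tl a _ ha hD1
  have k2 := key_tl b _ hb hD2
  have k3 := key_tl c _ hc hD3
  have hs := schur_side a b c ha hb hc h
  nlinarith [k1, k2, k3, hs]
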